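/- arXiv:1411.4419 — 3 statements merged into one kernel-verified Lean document; each statement's English description precedes it below -/
import Mathlib

section
/- Let D be a nonzero real m×n matrix with skinny SVD D = U S Vᵀ, where U is m×r with UᵀU = Iᵣ, V is n×r with VᵀV = Iᵣ, and S is an r×r diagonal matrix with positive diagonal entries. Then for every real n×n matrix X satisfying D = D X, one has ‖X‖_F ≥ ‖V Vᵀ‖_F, where ‖·‖_F denotes the Frobenius norm. In other words, C* = V Vᵀ is a minimizer of ‖C‖_F subject to D = D C. -/
open Matrix

/-- The Frobenius norm of a real matrix: ‖M‖_F = sqrt(trace(M Mᵀ)). -/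
noncomputable def frobeniusNorm {m n : ℕ} (M : Matrix (Fin m) (Fin n) ℝ) : ℝ :=
  Real.sqrt (Matrix.trace (M * Mᵀ))

lemma trace_mul_transpose_nonneg {a b : ℕ} (M : Matrix (Fin a) (Fin b) ℝ) :
    0 ≤ Matrix.trace (M * Mᵀ) := by
  simp only [Matrix.trace, Matrix.diag, Matrix.mul_apply, Matrix.transpose_apply]
  exact Finset.sum_nonneg fun i _ => Finset.sum_nonneg fun j _ => mul_self_nonneg _

/-- For a nonzero real m×n matrix D with skinny SVD D = U S Vᵀ,
every real n×n matrix X with D = D X satisfies ‖X‖_F ≥ ‖V Vᵀ‖_F, i.e.,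
C* = V Vᵀ is a minimizer of ‖C‖_F subject to D = D C. -/
theorem stmt_1 {m n r : ℕ}
    (D : Matrix (Fin m) (Fin n) ℝ) (hD : D ≠ 0)
    (U : Matrix (Fin m) (Fin r) ℝ) (S : Matrix (Fin r) (Fin r) ℝ)
    (V : Matrix (Fin n) (Fin r) ℝ)
    (hSVD : D = U * S * Vᵀ)
    (hU : Uᵀ * U = 1) (hV : Vᵀ * V = 1)
    (hSdiag : ∀ i j : Fin r, i ≠ j → S i j = 0)
    (hSpos : ∀ i : Fin r, 0 < S i i) :
    ∀ X : Matrix (Fin n) (Fin n) ℝ, D = D * X →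
      frobeniusNorm X ≥ frobeniusNorm (V * Vᵀ) := by
  intro X hX
  -- inverse of S
  set S' : Matrix (Fin r) (Fin r) ℝ := Matrix.diagonal (fun i => (S i i)⁻¹) with hS'
  have hS'S : S' * S = 1 := by
    ext i j
    rw [hS', Matrix.mul_apply]
    rw [Finset.sum_eq_single i]
    · by_cases h : i = j
      · subst h
        simp [Matrix.diagonal_apply, Matrix.one_apply,
          inv_mul_cancel₀ (hSpos i).ne']
      · simp [Matrix.diagonal_apply, Matrix.one_apply, h, hSdiag i j h]
    · intro b _ hb
      simp [Matrix.diagonal_apply, Ne.symm hb]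
    · intro h; exact absurd (Finset.mem_univ i) h
  -- Vᵀ X = Vᵀ
  have h1 : U * S * Vᵀ = U * S * Vᵀ * X := by rw [← hSVD, ← hX]
  have h3 : S * Vᵀ = S * Vᵀ * X := by
    have h2 := congrArg (fun M => Uᵀ * M) h1
    simp only [← Matrix.mul_assoc] at h2
    rw [hU, Matrix.one_mul] at h2
    exact h2
  have hVX : Vᵀ * X = Vᵀ := by
    have h4 := congrArg (fun M => S' * M) h3
    simp only [← Matrix.mul_assoc] at h4
    rw [hS'S, Matrix.one_mul] at h4
    exact h4.symm
  set P : Matrix (Fin n) (Fin n) ℝ := V * Vᵀ with hP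
  have hPsymm : Pᵀ = P := by rw [hP, Matrix.transpose_mul, Matrix.transpose_transpose]
  have hPX : P * X = P := by
    rw [hP, Matrix.mul_assoc, hVX]
  have hPP : P * P = P := by
    rw [hP, Matrix.mul_assoc, ← Matrix.mul_assoc Vᵀ V Vᵀ, hV, Matrix.one_mul]
  set Q : Matrix (Fin n) (Fin n) ℝ := X - P with hQ
  have hPQ : P * Q = 0 := by
    rw [hQ, Matrix.mul_sub, hPX, hPP, sub_self]
  have key : Matrix.trace (X * Xᵀ) =
      Matrix.trace (P * Pᵀ) + Matrix.trace (Q * Qᵀ) := by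
    have hXPQ : X = P + Q := by rw [hQ]; abel
    have e1 : Matrix.trace (P * Qᵀ) = 0 := by
      have : P * Qᵀ = (Q * P)ᵀ := by
        rw [Matrix.transpose_mul, hPsymm]
      rw [this, Matrix.trace_transpose, Matrix.trace_mul_comm, hPQ, Matrix.trace_zero]
    have e2 : Matrix.trace (Q * Pᵀ) = 0 := by
      rw [hPsymm, Matrix.trace_mul_comm, hPQ, Matrix.trace_zero]
    rw [hXPQ]
    rw [show (P + Q) * (P + Q)ᵀ = P * Pᵀ + P * Qᵀ + Q * Pᵀ + Q * Qᵀ by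
      rw [Matrix.transpose_add]; noncomm_ring]
    simp [Matrix.trace_add, e1, e2]
  have hle : Matrix.trace (P * Pᵀ) ≤ Matrix.trace (X * Xᵀ) := by
    rw [key]
    linarith [trace_mul_transpose_nonneg Q]
  exact Real.sqrt_le_sqrt hle
end

section
/- Let D be a nonzero real m×n matrix. Then every real n×n matrix C satisfying D = D C obeys ‖C‖_F² ≥ rank(D), where ‖·‖_F denotes the Frobenius norm. -/
open Matrix

/-!
The rows of `D` span a subspace `V` fixed by `v ↦ v ᵥ* C`. If the rows of `W` form an
orthonormal basis of `V`, then `P = Wᵀ * W` is the orthogonal projection onto `V` and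
`W * C = W`, so the trace pairing gives `⟨C, P⟩ = tr P = ‖P‖_F² = rank D`.
Cauchy–Schwarz, `⟨C, P⟩² ≤ ‖C‖_F² ‖P‖_F²`, then yields `rank D ≤ ‖C‖_F²`.
-/

namespace Matrix

variable {ι m n R : Type*} [Fintype n] [CommRing R]

theorem vecMul_eq_self_of_mem_span_row {D : Matrix m n R} {C : Matrix n n R} (hC : D * C = D)
    {v : n → R} (hv : v ∈ Submodule.span R (Set.range D.row)) : v ᵥ* C = v := by
  suffices Submodule.span R (Set.range D.row) ≤ (vecMulLinear C).eqLocus LinearMap.id from this hv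
  rw [Submodule.span_le, Set.range_subset_iff]
  intro i
  exact congrFun hC i

variable [Fintype m]

theorem trace_mul_transpose_self_eq_sum_sq (A : Matrix m n R) :
    trace (A * Aᵀ) = ∑ i, ∑ j, A i j ^ 2 := by
  simp only [← sum_hadamard_eq, hadamard_apply, sq]

variable [LinearOrder R] [IsStrictOrderedRing R]

theorem trace_mul_transpose_self_nonneg (A : Matrix m n R) : 0 ≤ trace (A * Aᵀ) := by
  rw [trace_mul_transpose_self_eq_sum_sq]
  positivity

theorem trace_mul_transpose_sq_le (A B : Matrix m n R) :
    trace (A * Bᵀ) ^ 2 ≤ trace (A * Aᵀ) * trace (B * Bᵀ) := by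
  simp only [trace_mul_transpose_self_eq_sum_sq, ← sum_hadamard_eq, hadamard_apply,
    ← Fintype.sum_prod_type']
  exact Finset.sum_mul_sq_le_sq_mul_sq _ _ _

theorem card_le_trace_mul_transpose_self [Fintype ι] [DecidableEq ι] {W : Matrix ι n R}
    {C : Matrix n n R} (hW : W * Wᵀ = 1) (hWC : W * C = W) :
    (Fintype.card ι : R) ≤ trace (C * Cᵀ) := by
  have hpair : trace (C * (Wᵀ * W)ᵀ) = Fintype.card ι := by
    rw [transpose_mul, transpose_transpose, ← Matrix.mul_assoc, trace_mul_comm,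
      ← Matrix.mul_assoc, hWC, hW, trace_one]
  have hproj : trace (Wᵀ * W * (Wᵀ * W)ᵀ) = Fintype.card ι := by
    rw [transpose_mul, transpose_transpose, Matrix.mul_assoc, ← Matrix.mul_assoc W, hW,
      Matrix.one_mul, trace_mul_comm, hW, trace_one]
  have hCS := trace_mul_transpose_sq_le C (Wᵀ * W)
  rw [hpair, hproj, sq] at hCS
  rcases (Nat.cast_nonneg (α := R) (Fintype.card ι)).eq_or_lt with h0 | hpos
  · exact h0 ▸ trace_mul_transpose_self_nonneg C
  · exact le_of_mul_le_mul_right hCS hpos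

end Matrix

theorem Submodule.exists_orthonormal_rows_mem {n : Type*} [Fintype n]
    (V : Submodule ℝ (n → ℝ)) :
    ∃ W : Matrix (Fin (Module.finrank ℝ V)) n ℝ, W * Wᵀ = 1 ∧ ∀ i, W i ∈ V := by
  let e := (WithLp.linearEquiv 2 ℝ (n → ℝ)).symm
  let b := (stdOrthonormalBasis ℝ (V.map e.toLinearMap)).reindex
    (finCongr (LinearEquiv.finrank_map_eq e V))
  refine ⟨.of fun i => (b i : EuclideanSpace ℝ n).ofLp, ?_, fun i => ?_⟩
  · ext i j
    have := orthonormal_iff_ite.mp b.orthonormal j i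
    simpa [mul_apply, one_apply, EuclideanSpace.inner_eq_star_dotProduct, dotProduct, eq_comm]
      using this
  · obtain ⟨v, hv, hvb⟩ := (b i).2
    show (b i : EuclideanSpace ℝ n).ofLp ∈ V
    simpa [← hvb, e] using hv

theorem stmt_6_general {m n : ℕ}
    (D : Matrix (Fin m) (Fin n) ℝ) :
    ∀ C : Matrix (Fin n) (Fin n) ℝ, D = D * C →
      (frobeniusNorm C) ^ 2 ≥ (D.rank : ℝ) := by
  intro C hC
  obtain ⟨W, hW, hWrow⟩ := (Submodule.span ℝ (Set.range D.row)).exists_orthonormal_rows_mem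
  have hWC : W * C = W := funext fun i => vecMul_eq_self_of_mem_span_row hC.symm (hWrow i)
  rw [rank_eq_finrank_span_row, frobeniusNorm, Real.sq_sqrt (trace_mul_transpose_self_nonneg C)]
  simpa using card_le_trace_mul_transpose_self hW hWC

/-- For a nonzero real m×n matrix D, every real n×n matrix C with
D = D C satisfies ‖C‖_F² ≥ rank(D). -/
theorem stmt_6 {m n : ℕ}
    (D : Matrix (Fin m) (Fin n) ℝ) (hD : D ≠ 0) :
    ∀ C : Matrix (Fin n) (Fin n) ℝ, D = D * C →
      (frobeniusNorm C) ^ 2 ≥ (D.rank : ℝ) :=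
  stmt_6_general D
end

section
/- Let D be a real m×n matrix and let A be a real n×n matrix that is symmetric and idempotent (A = Aᵀ and A A = A) with rank(A) = k. Suppose θ₁, …, θ_p are real m-vectors and σ₁, …, σ_p are nonzero real numbers satisfying the generalized eigenvalue equations D A Dᵀ θᵢ = σᵢ D Dᵀ θᵢ for all i, and suppose the vectors D Dᵀ θ₁, …, D Dᵀ θ_p are linearly independent. Then p ≤ k. In particular, the dimension of the feature space obtained by embedding the graph A (the number of generalized eigenvectors with nonzero eigenvalue) is at most the rank k of A. -/
open Matrix

/-!
Since `σᵢ ≠ 0`, the eigen-equation `(D A) (Dᵀ θᵢ) = σᵢ • D Dᵀ θᵢ` exhibits each `D Dᵀ θᵢ` in the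
column space of `D A`. Linearly independent vectors in that space number at most
`rank (D A) ≤ rank A = k`.
-/

namespace Matrix

variable {K : Type*} [Field K] {m n : Type*} [Fintype n]

theorem mem_range_mulVecLin_of_mulVec_eq_smul (B : Matrix m n K) {x : n → K} {y : m → K}
    {σ : K} (hσ : σ ≠ 0) (h : B *ᵥ x = σ • y) : y ∈ LinearMap.range B.mulVecLin :=
  ⟨σ⁻¹ • x, by rw [mulVecLin_apply, mulVec_smul, h, inv_smul_smul₀ hσ]⟩

theorem card_le_rank_of_linearIndependent_of_mem_range {ι : Type*} [Fintype ι]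
    (B : Matrix m n K) {v : ι → m → K} (hv : LinearIndependent K v)
    (hmem : ∀ i, v i ∈ LinearMap.range B.mulVecLin) : Fintype.card ι ≤ B.rank := by
  rw [← finrank_span_eq_card hv]
  exact Submodule.finrank_mono (Submodule.span_le.mpr (Set.range_subset_iff.mpr hmem))

end Matrix

theorem stmt_13_general {m n p k : ℕ}
    (D : Matrix (Fin m) (Fin n) ℝ)
    (A : Matrix (Fin n) (Fin n) ℝ)
    (hArank : A.rank = k)
    (θ : Fin p → (Fin m → ℝ)) (σ : Fin p → ℝ)
    (hσ : ∀ i : Fin p, σ i ≠ 0)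
    (heig : ∀ i : Fin p, (D * A * Dᵀ) *ᵥ θ i = σ i • ((D * Dᵀ) *ᵥ θ i))
    (hindep : LinearIndependent ℝ (fun i : Fin p => (D * Dᵀ) *ᵥ θ i)) :
    p ≤ k := by
  have hmem : ∀ i, (D * Dᵀ) *ᵥ θ i ∈ LinearMap.range (D * A).mulVecLin := fun i =>
    (D * A).mem_range_mulVecLin_of_mulVec_eq_smul (x := Dᵀ *ᵥ θ i) (hσ i)
      (by rw [mulVec_mulVec]; exact heig i)
  calc p = Fintype.card (Fin p) := (Fintype.card_fin p).symm
    _ ≤ (D * A).rank := (D * A).card_le_rank_of_linearIndependent_of_mem_range hindep hmem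
    _ ≤ A.rank := rank_mul_le_right D A
    _ = k := hArank

/-- Let D be a real m×n matrix and A a real n×n symmetric idempotent
matrix of rank k. If θ₁,…,θ_p are real m-vectors and σ₁,…,σ_p are nonzero reals
with D A Dᵀ θᵢ = σᵢ D Dᵀ θᵢ for all i, and the vectors D Dᵀ θ₁,…,D Dᵀ θ_p are
linearly independent, then p ≤ k. In particular, the feature dimension obtained
by embedding the graph A is at most the rank k of A. -/
theorem stmt_13 {m n p k : ℕ}
    (D : Matrix (Fin m) (Fin n) ℝ)
    (A : Matrix (Fin n) (Fin n) ℝ)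
    (hAsymm : A = Aᵀ) (hAidem : A * A = A)
    (hArank : A.rank = k)
    (θ : Fin p → (Fin m → ℝ)) (σ : Fin p → ℝ)
    (hσ : ∀ i : Fin p, σ i ≠ 0)
    (heig : ∀ i : Fin p, (D * A * Dᵀ) *ᵥ θ i = σ i • ((D * Dᵀ) *ᵥ θ i))
    (hindep : LinearIndependent ℝ (fun i : Fin p => (D * Dᵀ) *ᵥ θ i)) :
    p ≤ k :=
  stmt_13_general D A hArank θ σ hσ heig hindep
end
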